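/- arXiv:2503.18200 — 2 statements merged into one kernel-verified Lean document; each statement's English description precedes it below -/
import Mathlib

section
/- Lemma 3.3: Fix a face e_k of T and let Proj_k : ℝ^d → ℝ^d be the orthogonal projection onto the hyperplane H_k containing e_k. There exists a constant C > 0 such that for all polynomials v₀, v_b ∈ P_k, the function φ(X) = (v_b − v₀)(Proj_k X) · l_k(X) · Π_{i≠k} l_i(X)² satisfies ∫_T φ(X)² dx ≤ C h_T ∫_{e_k} (v_b − v₀)² dH^{d−1}. -/
/-!
Both sides are squared `L²` norms of linear images of `vb - v₀` in the finite-dimensional space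
of polynomials of degree at most `k`: `P ↦ (P ∘ Proj_k) · l_k ∏_{i ≠ k} l_i²` into `L²(T)` and
`P ↦ P|_{e_k}` into `L²(e_k, H^{d-1})`. On a finite-dimensional space a linear map is bounded by
any other linear map with smaller kernel, so it suffices to compare kernels. If `P` vanishes
`H^{d-1}`-a.e. on `e_k`, then `P` vanishes on a subset of positive measure of the hyperplane
`H_k ≅ ℝ^{d-1}`; the zero set of a nonzero polynomial on `ℝ^{d-1}` is Lebesgue-null, so `P`
vanishes on all of `H_k`, and therefore `P ∘ Proj_k = 0`. The factor `h_T` is absorbed into `C`.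
-/

open MeasureTheory RealInnerProductSpace
open scoped BigOperators

noncomputable section

/-- `f` is (the evaluation of) a real polynomial in `d` variables of total degree at most `r`. -/
def IsPolyDeg (d r : ℕ) (f : EuclideanSpace ℝ (Fin d) → ℝ) : Prop :=
  ∃ P : MvPolynomial (Fin d) ℝ, P.totalDegree ≤ r ∧
    ∀ x : EuclideanSpace ℝ (Fin d), f x = MvPolynomial.eval (fun j => x j) P

/-- Partial derivative in the `i`-th coordinate direction. -/
def pder (d : ℕ) (i : Fin d) (f : EuclideanSpace ℝ (Fin d) → ℝ) :
    EuclideanSpace ℝ (Fin d) → ℝ :=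
  fun x => fderiv ℝ f x (EuclideanSpace.single i (1 : ℝ))

/-- The second-order elliptic operator `E f = ∇·(κ∇f) = Σ_{i,j} κ_{ij} ∂_i ∂_j f`
for a constant matrix `κ`. -/
def Eop (d : ℕ) (κ : Matrix (Fin d) (Fin d) ℝ) (f : EuclideanSpace ℝ (Fin d) → ℝ) :
    EuclideanSpace ℝ (Fin d) → ℝ :=
  fun x => ∑ i, ∑ j, κ i j * pder d i (pder d j f) x

/-- `(κ ∇ f) · ν`. -/
def kGradDot (d : ℕ) (κ : Matrix (Fin d) (Fin d) ℝ) (f : EuclideanSpace ℝ (Fin d) → ℝ)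
    (ν : EuclideanSpace ℝ (Fin d)) : EuclideanSpace ℝ (Fin d) → ℝ :=
  fun x => (∑ a, (∑ b, κ a b * pder d b f x) * ν a)

/-- The affine function `l_i(x) = h_T⁻¹ ⟨x - A_i, n_i⟩` vanishing on the face `e_i`. -/
def lfun (d N : ℕ) (hT : ℝ) (A n : Fin N → EuclideanSpace ℝ (Fin d)) (i : Fin N) :
    EuclideanSpace ℝ (Fin d) → ℝ :=
  fun x => hT⁻¹ * ⟪(x - A i), (n i)⟫

/-- Orthogonal projection onto the hyperplane `{x | ⟨x - A, n⟩ = 0}` (for `‖n‖ = 1`). -/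
def projH (d : ℕ) (A n : EuclideanSpace ℝ (Fin d)) :
    EuclideanSpace ℝ (Fin d) → EuclideanSpace ℝ (Fin d) :=
  fun X => X - ⟪X - A, n⟫ • n

open MvPolynomial Module
open scoped ENNReal

section LinearBound

variable {𝕜 V W₁ W₂ : Type*} [NontriviallyNormedField 𝕜] [CompleteSpace 𝕜]
  [AddCommGroup V] [Module 𝕜 V] [FiniteDimensional 𝕜 V]
  [NormedAddCommGroup W₁] [NormedSpace 𝕜 W₁] [NormedAddCommGroup W₂] [NormedSpace 𝕜 W₂]

theorem LinearMap.exists_norm_le_mul_norm_of_ker_le (u : V →ₗ[𝕜] W₁) (v : V →ₗ[𝕜] W₂)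
    (h : LinearMap.ker v ≤ LinearMap.ker u) : ∃ C, 0 ≤ C ∧ ∀ x, ‖u x‖ ≤ C * ‖v x‖ := by
  -- `u = w ∘ v`, where `w` is continuous because `range v` is finite-dimensional.
  obtain ⟨g, hg⟩ := v.rangeRestrict.exists_rightInverse_of_surjective v.range_rangeRestrict
  let w : LinearMap.range v →L[𝕜] W₁ := LinearMap.toContinuousLinearMap (u ∘ₗ g)
  refine ⟨‖w‖, w.opNorm_nonneg, fun x => ?_⟩
  have hgv : v (g (v.rangeRestrict x)) = v x :=
    congrArg Subtype.val (LinearMap.congr_fun hg (v.rangeRestrict x))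
  have hux : u x = w (v.rangeRestrict x) := by
    have : x - g (v.rangeRestrict x) ∈ LinearMap.ker u := h (by simp [hgv])
    simpa [sub_eq_zero, w] using this
  rw [hux]
  exact w.le_opNorm _

end LinearBound

section L2

variable {V α β : Type*} [AddCommGroup V] [Module ℝ V] [MeasurableSpace α] [MeasurableSpace β]
  {μ : Measure α} {ν : Measure β}

theorem MeasureTheory.MemLp.toLp_eq_zero_iff {p : ℝ≥0∞} {f : α → ℝ} (hf : MemLp f p μ) :
    hf.toLp f = 0 ↔ f =ᵐ[μ] 0 := by
  rw [Lp.eq_zero_iff_ae_eq_zero]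
  exact ⟨hf.coeFn_toLp.symm.trans, hf.coeFn_toLp.trans⟩

theorem MeasureTheory.MemLp.integral_sq_eq_norm_toLp_sq {f : α → ℝ} (hf : MemLp f 2 μ) :
    ∫ a, f a ^ 2 ∂μ = ‖hf.toLp f‖ ^ 2 := by
  rw [← real_inner_self_eq_norm_sq, L2.inner_def]
  refine integral_congr_ae ?_
  filter_upwards [hf.coeFn_toLp] with a ha
  simp [ha, sq]

def LinearMap.toLp {p : ℝ≥0∞} [Fact (1 ≤ p)] (f : V →ₗ[ℝ] α → ℝ) (hf : ∀ x, MemLp (f x) p μ) :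
    V →ₗ[ℝ] Lp ℝ p μ where
  toFun x := (hf x).toLp (f x)
  map_add' x y := ((hf _).toLp_congr ((hf x).add (hf y)) (by rw [map_add])).trans
    (MemLp.toLp_add _ _)
  map_smul' c x := ((hf _).toLp_congr ((hf x).const_smul c) (by rw [map_smul])).trans
    (MemLp.toLp_const_smul _ _)

theorem LinearMap.toLp_apply {p : ℝ≥0∞} [Fact (1 ≤ p)] (f : V →ₗ[ℝ] α → ℝ)
    (hf : ∀ x, MemLp (f x) p μ) (x : V) : f.toLp hf x = (hf x).toLp (f x) := rfl

theorem exists_integral_sq_le_mul_integral_sq [FiniteDimensional ℝ V]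
    (f : V →ₗ[ℝ] α → ℝ) (g : V →ₗ[ℝ] β → ℝ)
    (hf : ∀ x, MemLp (f x) 2 μ) (hg : ∀ x, MemLp (g x) 2 ν)
    (h : ∀ x, g x =ᵐ[ν] 0 → f x =ᵐ[μ] 0) :
    ∃ C > 0, ∀ x, ∫ a, f x a ^ 2 ∂μ ≤ C * ∫ b, g x b ^ 2 ∂ν := by
  have hker : LinearMap.ker (g.toLp hg) ≤ LinearMap.ker (f.toLp hf) := fun x hx => by
    simp only [LinearMap.mem_ker, LinearMap.toLp_apply, MemLp.toLp_eq_zero_iff] at hx ⊢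
    exact h x hx
  obtain ⟨C, hC, hbound⟩ := LinearMap.exists_norm_le_mul_norm_of_ker_le _ _ hker
  refine ⟨C ^ 2 + 1, by positivity, fun x => ?_⟩
  have hx := hbound x
  simp only [LinearMap.toLp_apply] at hx
  rw [(hf x).integral_sq_eq_norm_toLp_sq, (hg x).integral_sq_eq_norm_toLp_sq]
  calc ‖(hf x).toLp (f x)‖ ^ 2 ≤ (C * ‖(hg x).toLp (g x)‖) ^ 2 := by gcongr
    _ ≤ (C ^ 2 + 1) * ‖(hg x).toLp (g x)‖ ^ 2 := by nlinarith [sq_nonneg ‖(hg x).toLp (g x)‖]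

end L2

theorem MvPolynomial.volume_setOf_eval_eq_zero {m : ℕ} {q : MvPolynomial (Fin m) ℝ}
    (hq : q ≠ 0) : volume {v : Fin m → ℝ | eval v q = 0} = 0 := by
  induction m with
  | zero =>
    convert measure_empty (μ := (volume : Measure (Fin 0 → ℝ)))
    refine Set.eq_empty_of_forall_notMem fun v hv => hq (MvPolynomial.funext fun w => ?_)
    rw [Subsingleton.elim w v, map_zero]
    exact hv
  | succ m ih =>
    set Q := finSuccEquiv ℝ m q
    have hQ : Q ≠ 0 := (EmbeddingLike.map_ne_zero_iff).mpr hq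
    -- Off the null zero set of the leading coefficient of `q` in its first variable, the slice
    -- of the zero set of `q` is the finite root set of a nonzero univariate polynomial.
    have hslice : ∀ᵐ y : Fin m → ℝ, volume {t : ℝ | eval (Fin.cons t y) q = 0} = 0 := by
      have hc : ∀ᵐ y : Fin m → ℝ, eval y Q.leadingCoeff ≠ 0 :=
        ae_iff.2 (by simpa using ih (Polynomial.leadingCoeff_ne_zero.2 hQ))
      filter_upwards [hc] with y hy
      have hQy : Q.map (eval y) ≠ 0 := fun h => hy <| by
        simpa [Polynomial.coeff_map] using congrArg (Polynomial.coeff · Q.natDegree) h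
      simp_rw [eval_eq_eval_mv_eval']
      exact (Polynomial.finite_setOfPred_isRoot hQy).measure_zero _
    set S := {p : ℝ × (Fin m → ℝ) | eval (Fin.cons p.1 p.2) q = 0}
    have hS : MeasurableSet S :=
      (isClosed_eq ((continuous_eval q).comp (continuous_fst.finCons continuous_snd))
        continuous_const).measurableSet
    have hpre : {v : Fin (m + 1) → ℝ | eval v q = 0} =
        MeasurableEquiv.piFinSuccAbove (fun _ => ℝ) 0 ⁻¹' S := by
      ext v
      simp [S]
    rw [hpre, (volume_preserving_piFinSuccAbove (fun _ => ℝ) 0).measure_preimage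
      hS.nullMeasurableSet, Measure.volume_eq_prod, Measure.prod_apply_symm hS]
    exact (lintegral_congr_ae hslice).trans lintegral_zero

theorem MvPolynomial.continuous_eval_euclideanSpace {d : ℕ} (P : MvPolynomial (Fin d) ℝ) :
    Continuous fun x : EuclideanSpace ℝ (Fin d) => eval (fun j => x j) P :=
  (continuous_eval P).comp (PiLp.continuous_ofLp 2 _)

theorem AffineMap.exists_mvPolynomial_eval_eq_apply {m d : ℕ}
    (φ : EuclideanSpace ℝ (Fin m) →ᵃ[ℝ] EuclideanSpace ℝ (Fin d)) (j : Fin d) :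
    ∃ g : MvPolynomial (Fin m) ℝ, ∀ y, eval (fun i => y i) g = φ y j := by
  refine ⟨C (φ 0 j) + ∑ i, C (φ.linear (EuclideanSpace.single i 1) j) * X i, fun y => ?_⟩
  have hlin : φ.linear y j = ∑ i, y i * φ.linear (EuclideanSpace.single i 1) j := by
    conv_lhs => rw [← (EuclideanSpace.basisFun (Fin m) ℝ).sum_repr y]
    simp [map_sum]
  have hφ : φ y = φ.linear y + φ 0 := eq_add_of_sub_eq (congrFun φ.decomp' y).symm
  simp [hφ, hlin, mul_comm, add_comm]

theorem MvPolynomial.exists_eval_eq_eval_comp_affineMap {m d : ℕ}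
    (φ : EuclideanSpace ℝ (Fin m) →ᵃ[ℝ] EuclideanSpace ℝ (Fin d)) (P : MvPolynomial (Fin d) ℝ) :
    ∃ q : MvPolynomial (Fin m) ℝ, ∀ y, eval (fun i => y i) q = eval (fun j => φ y j) P := by
  induction P using MvPolynomial.induction_on with
  | C a => exact ⟨C a, by simp⟩
  | add P Q hP hQ =>
    obtain ⟨p, hp⟩ := hP
    obtain ⟨q, hq⟩ := hQ
    exact ⟨p + q, by simp [hp, hq]⟩
  | mul_X P j hP =>
    obtain ⟨p, hp⟩ := hP
    obtain ⟨g, hg⟩ := φ.exists_mvPolynomial_eval_eq_apply j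
    exact ⟨p * g, by simp [hp, hg]⟩

instance isAddHaarMeasure_hausdorffMeasure_euclideanSpace (m : ℕ) :
    (μH[m] : Measure (EuclideanSpace ℝ (Fin m))).IsAddHaarMeasure := by
  simpa using isAddHaarMeasure_hausdorffMeasure (E := EuclideanSpace ℝ (Fin m))

theorem Isometry.hausdorffMeasure_lt_top_of_isCompact {m : ℕ} {X : Type*} [MetricSpace X]
    [MeasurableSpace X] [BorelSpace X] {ψ : EuclideanSpace ℝ (Fin m) → X} (hψ : Isometry ψ)
    {K : Set X} (hK : IsCompact K) (hKψ : K ⊆ Set.range ψ) : μH[m] K < ∞ := by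
  rw [← Set.inter_eq_left.2 hKψ, ← hψ.hausdorffMeasure_preimage (Or.inl m.cast_nonneg)]
  exact (hψ.isClosedEmbedding.isCompact_preimage hK).measure_lt_top

theorem MvPolynomial.eval_comp_eq_zero_of_ae_restrict {m d : ℕ}
    (ψ : EuclideanSpace ℝ (Fin m) →ᵃⁱ[ℝ] EuclideanSpace ℝ (Fin d)) (P : MvPolynomial (Fin d) ℝ)
    {e : Set (EuclideanSpace ℝ (Fin d))} (heψ : e ⊆ Set.range ψ) (he : μH[m] e ≠ 0)
    (hPe : ∀ᵐ x ∂(μH[m]).restrict e, eval (fun j => x j) P = 0) (y : EuclideanSpace ℝ (Fin m)) :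
    eval (fun j => ψ y j) P = 0 := by
  set Z := {x : EuclideanSpace ℝ (Fin d) | eval (fun j => x j) P = 0}
  have hZ : MeasurableSet Z :=
    (isClosed_eq (continuous_eval_euclideanSpace P) continuous_const).measurableSet
  have hZe : μH[m] (Z ∩ e) ≠ 0 := by
    rwa [← Measure.restrict_apply hZ, measure_congr (ae_eq_univ.2 (mem_ae_iff.1 hPe)),
      Measure.restrict_apply_univ]
  obtain ⟨q, hq⟩ := exists_eval_eq_eval_comp_affineMap ψ.toAffineMap P
  suffices q = 0 by simpa [this] using (hq y).symm
  by_contra hq0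
  have hnull : volume {y : EuclideanSpace ℝ (Fin m) | eval (fun i => y i) q = 0} = 0 :=
    (PiLp.volume_preserving_ofLp (Fin m)).measure_preimage
      (isClosed_eq (continuous_eval q) continuous_const).measurableSet.nullMeasurableSet ▸
      volume_setOf_eval_eq_zero hq0
  refine hZe (le_antisymm ?_ zero_le)
  calc μH[m] (Z ∩ e) = μH[m] (ψ ⁻¹' (Z ∩ e)) := by
        rw [ψ.isometry.hausdorffMeasure_preimage (Or.inl m.cast_nonneg),
          Set.inter_eq_left.2 (Set.inter_subset_right.trans heψ)]
    _ ≤ μH[m] {y : EuclideanSpace ℝ (Fin m) | eval (fun i => y i) q = 0} :=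
        measure_mono fun y hy => (hq y).trans hy.1
    _ = 0 := Measure.absolutelyContinuous_isAddHaarMeasure _ volume hnull

theorem exists_affineIsometry_range_eq_setOf_inner_eq_zero {m : ℕ} {E : Type*}
    [NormedAddCommGroup E] [InnerProductSpace ℝ E] (hE : finrank ℝ E = m + 1) (A : E) {n : E}
    (hn : n ≠ 0) :
    ∃ ψ : EuclideanSpace ℝ (Fin m) →ᵃⁱ[ℝ] E, Set.range ψ = {x | ⟪x - A, n⟫ = 0} := by
  have : Fact (finrank ℝ E = m + 1) := ⟨hE⟩
  let b := OrthonormalBasis.fromOrthogonalSpanSingleton (𝕜 := ℝ) m hn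
  refine ⟨(AffineIsometryEquiv.vaddConst ℝ A).toAffineIsometry.comp
    ((ℝ ∙ n)ᗮ.subtypeₗᵢ.comp b.repr.symm.toLinearIsometry).toAffineIsometry, ?_⟩
  ext x
  simp only [Set.mem_range, Set.mem_ofPred_eq]
  constructor
  · rintro ⟨y, rfl⟩
    simpa using Submodule.mem_orthogonal_singleton_iff_inner_left.1 (b.repr.symm y).2
  · intro hx
    refine ⟨b.repr ⟨x - A, Submodule.mem_orthogonal_singleton_iff_inner_left.2 hx⟩, ?_⟩
    simp

theorem Continuous.memLp_restrict_of_isCompact {X E : Type*} [TopologicalSpace X] [T2Space X]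
    [MeasurableSpace X] [OpensMeasurableSpace X] [NormedAddCommGroup E]
    [SecondCountableTopologyEither X E] {μ : Measure X}
    {K : Set X} (hK : IsCompact K) (hμK : μ K ≠ ∞) {f : X → E} (hf : Continuous f)
    (p : ℝ≥0∞) : MemLp f p (μ.restrict K) := by
  have : IsFiniteMeasure (μ.restrict K) := isFiniteMeasure_restrict.2 hμK
  obtain ⟨C, hC⟩ := hK.exists_bound_of_continuousOn hf.continuousOn
  exact MemLp.of_bound hf.aestronglyMeasurable C ((ae_restrict_mem hK.measurableSet).mono hC)

theorem inner_projH_sub_eq_zero {d : ℕ} (A : EuclideanSpace ℝ (Fin d))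
    {n : EuclideanSpace ℝ (Fin d)} (hn : ‖n‖ = 1) (x : EuclideanSpace ℝ (Fin d)) :
    ⟪projH d A n x - A, n⟫ = 0 := by
  rw [projH, sub_right_comm, inner_sub_left, real_inner_smul_left, real_inner_self_eq_norm_sq, hn]
  ring

theorem continuous_projH {d : ℕ} (A n : EuclideanSpace ℝ (Fin d)) : Continuous (projH d A n) := by
  unfold projH; fun_prop

theorem continuous_lfun {d N : ℕ} (hT : ℝ) (A n : Fin N → EuclideanSpace ℝ (Fin d)) (i : Fin N) :
    Continuous (lfun d N hT A n i) := by
  unfold lfun; fun_prop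

theorem exists_integral_sq_eval_projH_mul_le {m : ℕ} (k : ℕ)
    {T e : Set (EuclideanSpace ℝ (Fin (m + 1)))} (hT : Bornology.IsBounded T) (he : IsCompact e)
    (A : EuclideanSpace ℝ (Fin (m + 1))) {n : EuclideanSpace ℝ (Fin (m + 1))} (hn : ‖n‖ = 1)
    (heH : e ⊆ {x | ⟪x - A, n⟫ = 0}) (he_pos : μH[m] e ≠ 0)
    {w : EuclideanSpace ℝ (Fin (m + 1)) → ℝ} (hw : Continuous w) :
    ∃ C > 0, ∀ P : MvPolynomial (Fin (m + 1)) ℝ, P.totalDegree ≤ k →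
      ∫ x in T, (eval (fun j => projH (m + 1) A n x j) P * w x) ^ 2 ≤
        C * ∫ x in e, eval (fun j => x j) P ^ 2 ∂μH[m] := by
  obtain ⟨ψ, hψ⟩ := exists_affineIsometry_range_eq_setOf_inner_eq_zero
    finrank_euclideanSpace_fin A (norm_ne_zero_iff.1 (hn.trans_ne one_ne_zero))
  have heψ : e ⊆ Set.range ψ := hψ ▸ heH
  set V := restrictTotalDegree (Fin (m + 1)) ℝ k
  set proj := projH (m + 1) A n
  let f : V →ₗ[ℝ] EuclideanSpace ℝ (Fin (m + 1)) → ℝ := LinearMap.pi (fun x =>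
    (aeval fun j => proj x j).toLinearMap.smulRight (w x)) ∘ₗ V.subtype
  let g : V →ₗ[ℝ] EuclideanSpace ℝ (Fin (m + 1)) → ℝ :=
    LinearMap.pi (fun x => (aeval fun j => x j).toLinearMap) ∘ₗ V.subtype
  have hf_apply (P : V) :
      f P = fun x => eval (fun j => proj x j) (P : MvPolynomial _ ℝ) * w x := by
    ext x; simp [f]
  have hg_apply (P : V) : g P = fun x => eval (fun j => x j) (P : MvPolynomial _ ℝ) := by
    ext x; simp [g]
  have hf (P : V) : MemLp (f P) 2 (volume.restrict T) := by
    have hcont := ((continuous_eval_euclideanSpace P.1).comp (continuous_projH A n)).mul hw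
    rw [hf_apply]
    exact (hcont.memLp_restrict_of_isCompact hT.isCompact_closure
      hT.isCompact_closure.measure_lt_top.ne 2).mono_measure
      (Measure.restrict_mono subset_closure le_rfl)
  have hg (P : V) : MemLp (g P) 2 (μH[m].restrict e) := by
    rw [hg_apply]
    exact (continuous_eval_euclideanSpace P.1).memLp_restrict_of_isCompact he
      (ψ.isometry.hausdorffMeasure_lt_top_of_isCompact he heψ).ne 2
  have hker (P : V) (hP : g P =ᵐ[μH[m].restrict e] 0) : f P =ᵐ[volume.restrict T] 0 :=
    Filter.Eventually.of_forall fun x => by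
      obtain ⟨y, hy⟩ : proj x ∈ Set.range ψ := hψ ▸ inner_projH_sub_eq_zero A hn x
      rw [hg_apply] at hP
      simp [hf_apply, ← hy, eval_comp_eq_zero_of_ae_restrict ψ P heψ he_pos hP y]
  obtain ⟨C, hC, hbound⟩ := exists_integral_sq_le_mul_integral_sq f g hf hg hker
  refine ⟨C, hC, fun P hP => ?_⟩
  simpa [hf_apply, hg_apply] using hbound ⟨P, (mem_restrictTotalDegree _ _ _).2 hP⟩

theorem stmt3_general (d N : ℕ) (hd : 2 ≤ d)
    (T : Set (EuclideanSpace ℝ (Fin d)))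
    (hTbdd : Bornology.IsBounded T)
    (e : Fin N → Set (EuclideanSpace ℝ (Fin d)))
    (A n : Fin N → EuclideanSpace ℝ (Fin d)) (hn : ∀ i, ‖n i‖ = 1)
    (he_cpt : ∀ i, IsCompact (e i))
    (he_sub : ∀ i, e i ⊆ {x | ⟪x - A i, n i⟫ = 0})
    (he_pos : ∀ i, 0 < μH[((d : ℝ) - 1)] (e i))
    (hT : ℝ) (hT0 : 0 < hT)
    (k : ℕ) (k₀ : Fin N) :
    ∃ C > (0 : ℝ), ∀ v₀ vb : EuclideanSpace ℝ (Fin d) → ℝ,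
      IsPolyDeg d k v₀ → IsPolyDeg d k vb →
      ∫ x in T, ((vb (projH d (A k₀) (n k₀) x) - v₀ (projH d (A k₀) (n k₀) x)) *
          lfun d N hT A n k₀ x * ∏ i ∈ Finset.univ.erase k₀, (lfun d N hT A n i x) ^ 2) ^ 2 ≤
        C * hT * ∫ x in e k₀, (vb x - v₀ x) ^ 2 ∂μH[((d : ℝ) - 1)] := by
  obtain ⟨m, rfl⟩ : ∃ m, d = m + 1 := ⟨d - 1, by omega⟩
  have hdim : ((m + 1 : ℕ) : ℝ) - 1 = m := by push_cast; ring
  simp only [hdim] at he_pos ⊢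
  have hbubble : Continuous fun x => lfun (m + 1) N hT A n k₀ x *
      ∏ i ∈ Finset.univ.erase k₀, lfun (m + 1) N hT A n i x ^ 2 :=
    (continuous_lfun _ _ _ k₀).mul
      (continuous_finsetProd _ fun i _ => (continuous_lfun _ _ _ i).pow 2)
  obtain ⟨C, hC, hbound⟩ := exists_integral_sq_eval_projH_mul_le k hTbdd (he_cpt k₀) (A k₀)
    (hn k₀) (he_sub k₀) (he_pos k₀).ne' hbubble
  refine ⟨C / hT, by positivity, fun v₀ vb ⟨P₀, hP₀, hv₀⟩ ⟨Pb, hPb, hvb⟩ => ?_⟩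
  rw [div_mul_cancel₀ _ hT0.ne']
  convert hbound (Pb - P₀) ((totalDegree_sub _ _).trans (max_le hPb hP₀)) using 3
  · simp only [hv₀, hvb, map_sub]
    ring
  · simp [hv₀, hvb]

/-- Lemma 3.3. -/
theorem stmt3 (d N : ℕ) (hd : 2 ≤ d) (hN : 1 ≤ N)
    (T : Set (EuclideanSpace ℝ (Fin d))) (hTopen : IsOpen T) (hTne : T.Nonempty)
    (hTbdd : Bornology.IsBounded T)
    (e : Fin N → Set (EuclideanSpace ℝ (Fin d)))
    (A n : Fin N → EuclideanSpace ℝ (Fin d)) (hn : ∀ i, ‖n i‖ = 1)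
    (he_cpt : ∀ i, IsCompact (e i))
    (he_sub : ∀ i, e i ⊆ {x | ⟪x - A i, n i⟫ = 0})
    (he_pos : ∀ i, 0 < μH[((d : ℝ) - 1)] (e i))
    (hbd : frontier T = ⋃ i, e i)
    (hT : ℝ) (hT0 : 0 < hT) (hTdiam : hT = Metric.diam T)
    (k : ℕ) (hk : 1 ≤ k) (k₀ : Fin N) :
    ∃ C > (0 : ℝ), ∀ v₀ vb : EuclideanSpace ℝ (Fin d) → ℝ,
      IsPolyDeg d k v₀ → IsPolyDeg d k vb →
      ∫ x in T, ((vb (projH d (A k₀) (n k₀) x) - v₀ (projH d (A k₀) (n k₀) x)) *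
          lfun d N hT A n k₀ x * ∏ i ∈ Finset.univ.erase k₀, (lfun d N hT A n i x) ^ 2) ^ 2 ≤
        C * hT * ∫ x in e k₀, (vb x - v₀ x) ^ 2 ∂μH[((d : ℝ) - 1)] :=
  stmt3_general d N hd T hTbdd e A n hn he_cpt he_sub he_pos hT hT0 k k₀
end
end

section
/- Weighted domain inverse inequality (estimate (3.4) used in the proof of Lemma 3.1): Let T ⊆ ℝ^d be a nonempty bounded open set and let Φ : ℝ^d → ℝ be continuous with Φ(x) ≥ 0 for all x ∈ T. Suppose there exist a nonempty open set T̂ ⊆ T and a constant ρ₀ > 0 with Φ(x) ≥ ρ₀ for all x ∈ T̂. Then for every integer r ≥ 0 there exists a constant C > 0 such that ∫_T Φ(x) q(x)² dx ≥ C ∫_T q(x)² dx for every real polynomial function q on ℝ^d of total degree at most r. -/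
open MeasureTheory
open scoped BigOperators

noncomputable section

/-! A polynomial vanishing on a nonempty open set vanishes identically, so on polynomials of
degree at most `r` the seminorm `‖q‖_{L²(T̂)}` is a norm. The space of these polynomials is
finite-dimensional, so this norm dominates `‖q‖_{L²(T)}`: `∫_T q² ≤ K ∫_T̂ q²`. Hence
`ρ₀ ∫_T q² ≤ K ρ₀ ∫_T̂ q² ≤ K ∫_T̂ Φ q² ≤ K ∫_T Φ q²`. -/

open Bornology

section NormComparison

variable {𝕜 V E F : Type*} [NontriviallyNormedField 𝕜] [CompleteSpace 𝕜]
  [AddCommGroup V] [Module 𝕜 V] [FiniteDimensional 𝕜 V]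
  [NormedAddCommGroup E] [NormedSpace 𝕜 E] [NormedAddCommGroup F] [NormedSpace 𝕜 F]

theorem LinearMap.exists_norm_le_mul_norm_of_injective (f : V →ₗ[𝕜] E) (g : V →ₗ[𝕜] F)
    (hg : Function.Injective g) : ∃ C > 0, ∀ v, ‖f v‖ ≤ C * ‖g v‖ := by
  let e := LinearEquiv.ofInjective g hg
  let ψ := LinearMap.toContinuousLinearMap (f ∘ₗ e.symm.toLinearMap)
  refine ⟨‖ψ‖ + 1, by positivity, fun v => ?_⟩
  calc ‖f v‖ = ‖ψ (e v)‖ := by simp [ψ]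
    _ ≤ ‖ψ‖ * ‖g v‖ := ψ.le_opNorm (e v)
    _ ≤ (‖ψ‖ + 1) * ‖g v‖ := by gcongr; linarith

end NormComparison

section BoundedSets

variable {α E : Type*} [MetricSpace α] [ProperSpace α] [MeasurableSpace α]
  [OpensMeasurableSpace α] {μ : Measure α} [IsFiniteMeasureOnCompacts μ] {s : Set α}
  [NormedAddCommGroup E]

theorem Continuous.integrableOn_of_isBounded {f : α → E} (hf : Continuous f)
    (hs : IsBounded s) : IntegrableOn f s μ :=
  (hf.continuousOn.integrableOn_compact hs.isCompact_closure).mono_set subset_closure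

theorem Continuous.memLp_restrict_of_isBounded {f : α → E} (hf : Continuous f)
    (hs : IsBounded s) (p : ENNReal) : MemLp f p (μ.restrict s) := by
  have hK := hs.isCompact_closure
  have : IsFiniteMeasure (μ.restrict (closure s)) :=
    isFiniteMeasure_restrict.2 hK.measure_lt_top.ne
  obtain ⟨C, hC⟩ := hK.exists_bound_of_continuousOn hf.continuousOn
  have hbound : ∀ᵐ x ∂μ.restrict (closure s), ‖f x‖ ≤ C :=
    (ae_restrict_iff' isClosed_closure.measurableSet).2 (ae_of_all _ hC)
  exact ((memLp_top_of_bound hf.aestronglyMeasurable C hbound).mono_exponent le_top).mono_measure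
    (Measure.restrict_mono subset_closure le_rfl)

variable (𝕜 : Type*) [NormedRing 𝕜] [Module 𝕜 E] [IsBoundedSMul 𝕜 E] (p : ENNReal) (μ)

def ContinuousMap.toLpRestrict (hs : IsBounded s) : C(α, E) →ₗ[𝕜] Lp E p (μ.restrict s) where
  toFun f := (f.continuous.memLp_restrict_of_isBounded hs p).toLp f
  map_add' _ _ := MemLp.toLp_add _ _
  map_smul' _ _ := MemLp.toLp_const_smul _ _

variable {p μ}

theorem ContinuousMap.coeFn_toLpRestrict (hs : IsBounded s) (f : C(α, E)) :
    toLpRestrict μ 𝕜 p hs f =ᵐ[μ.restrict s] f :=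
  (f.continuous.memLp_restrict_of_isBounded hs p).coeFn_toLp

theorem ContinuousMap.norm_toLpRestrict_two_sq (hs : IsBounded s) (f : C(α, ℝ)) :
    ‖toLpRestrict μ ℝ 2 hs f‖ ^ 2 = ∫ x in s, f x ^ 2 ∂μ := by
  rw [← real_inner_self_eq_norm_sq, L2.inner_def]
  refine integral_congr_ae ?_
  filter_upwards [coeFn_toLpRestrict ℝ hs f] with x hx
  rw [hx, RCLike.inner_apply, conj_trivial, sq]

end BoundedSets

namespace MvPolynomial

variable {ι : Type*}

def toEuclideanContinuousMap : MvPolynomial ι ℝ →ₐ[ℝ] C(EuclideanSpace ℝ ι, ℝ) :=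
  aeval fun i => (EuclideanSpace.proj i : EuclideanSpace ℝ ι →L[ℝ] ℝ)

@[simp]
theorem toEuclideanContinuousMap_apply (P : MvPolynomial ι ℝ) (x : EuclideanSpace ℝ ι) :
    toEuclideanContinuousMap P x = eval (fun i => x i) P :=
  DFunLike.congr_fun (comp_aeval (R := ℝ) _ (ContinuousMap.evalAlgHom ℝ ℝ x)) P

theorem analyticOnNhd_toEuclideanContinuousMap [Fintype ι] (P : MvPolynomial ι ℝ) :
    AnalyticOnNhd ℝ (toEuclideanContinuousMap P) Set.univ := by
  rw [show ⇑(toEuclideanContinuousMap P) = fun x : EuclideanSpace ℝ ι => eval (fun i => x i) P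
    from _root_.funext (toEuclideanContinuousMap_apply P)]
  simpa using AnalyticOnNhd.eval_continuousLinearMap' (𝕜 := ℝ) (fun i => EuclideanSpace.proj i) P

theorem eq_zero_of_toEuclideanContinuousMap_ae_eq_zero [Fintype ι]
    {μ : Measure (EuclideanSpace ℝ ι)} [μ.IsOpenPosMeasure] {U : Set (EuclideanSpace ℝ ι)}
    (hU : IsOpen U) (hUne : U.Nonempty)
    {P : MvPolynomial ι ℝ} (hP : toEuclideanContinuousMap P =ᵐ[μ.restrict U] 0) : P = 0 := by
  have hzero_on : Set.EqOn (toEuclideanContinuousMap P) 0 U :=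
    Measure.eqOn_open_of_ae_eq hP hU (map_continuous _).continuousOn continuousOn_const
  obtain ⟨x₀, hx₀⟩ := hUne
  have hzero : Set.EqOn (toEuclideanContinuousMap P) 0 Set.univ :=
    (analyticOnNhd_toEuclideanContinuousMap P).eqOn_zero_of_preconnected_of_eventuallyEq_zero
      isPreconnected_univ (Set.mem_univ x₀) (Filter.mem_of_superset (hU.mem_nhds hx₀) hzero_on)
  refine MvPolynomial.funext fun y => ?_
  simpa using hzero (Set.mem_univ (WithLp.toLp 2 y))

theorem exists_integral_sq_le_mul_integral_sq [Fintype ι] {μ : Measure (EuclideanSpace ℝ ι)}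
    [μ.IsOpenPosMeasure] [IsFiniteMeasureOnCompacts μ] {T U : Set (EuclideanSpace ℝ ι)}
    (hT : IsBounded T) (hU : IsBounded U) (hUo : IsOpen U) (hUne : U.Nonempty) (r : ℕ) :
    ∃ K > 0, ∀ P ∈ restrictTotalDegree ι ℝ r,
      ∫ x in T, toEuclideanContinuousMap P x ^ 2 ∂μ ≤
        K * ∫ x in U, toEuclideanContinuousMap P x ^ 2 ∂μ := by
  let toL2 (S : Set (EuclideanSpace ℝ ι)) (hS : IsBounded S) :
      restrictTotalDegree ι ℝ r →ₗ[ℝ] Lp ℝ 2 (μ.restrict S) :=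
    ContinuousMap.toLpRestrict μ ℝ 2 hS ∘ₗ toEuclideanContinuousMap.toLinearMap ∘ₗ
      (restrictTotalDegree ι ℝ r).subtype
  have hinj : Function.Injective (toL2 U hU) := by
    rw [← LinearMap.ker_eq_bot, LinearMap.ker_eq_bot']
    intro P hP
    exact Subtype.ext <| eq_zero_of_toEuclideanContinuousMap_ae_eq_zero hUo hUne <|
      (ContinuousMap.coeFn_toLpRestrict ℝ hU _).symm.trans (Lp.eq_zero_iff_ae_eq_zero.mp hP)
  obtain ⟨C, hC, hle⟩ := (toL2 T hT).exists_norm_le_mul_norm_of_injective _ hinj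
  refine ⟨C ^ 2, by positivity, fun P hP => ?_⟩
  rw [← ContinuousMap.norm_toLpRestrict_two_sq hT, ← ContinuousMap.norm_toLpRestrict_two_sq hU]
  calc ‖toL2 T hT ⟨P, hP⟩‖ ^ 2 ≤ (C * ‖toL2 U hU ⟨P, hP⟩‖) ^ 2 := by gcongr; exact hle _
    _ = C ^ 2 * ‖toL2 U hU ⟨P, hP⟩‖ ^ 2 := mul_pow _ _ _

end MvPolynomial

open MvPolynomial in
theorem stmt13_general (d : ℕ) (T : Set (EuclideanSpace ℝ (Fin d)))
    (hTopen : IsOpen T) (hTbdd : Bornology.IsBounded T)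
    (Φ : EuclideanSpace ℝ (Fin d) → ℝ) (hΦc : Continuous Φ)
    (hΦ0 : ∀ x ∈ T, 0 ≤ Φ x)
    (That : Set (EuclideanSpace ℝ (Fin d))) (hThat : IsOpen That) (hThatne : That.Nonempty)
    (hsub : That ⊆ T) (ρ₀ : ℝ) (hρ : 0 < ρ₀) (hlb : ∀ x ∈ That, ρ₀ ≤ Φ x) :
    ∀ r : ℕ, ∃ C > (0 : ℝ), ∀ q : EuclideanSpace ℝ (Fin d) → ℝ, IsPolyDeg d r q →
      C * ∫ x in T, (q x) ^ 2 ≤ ∫ x in T, Φ x * (q x) ^ 2 := by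
  intro r
  have hThatbdd : IsBounded That := hTbdd.subset hsub
  obtain ⟨K, hK, hcomp⟩ :=
    exists_integral_sq_le_mul_integral_sq (μ := volume) hTbdd hThatbdd hThat hThatne r
  refine ⟨ρ₀ / K, by positivity, ?_⟩
  rintro q ⟨P, hdeg, hq⟩
  obtain rfl : q = toEuclideanContinuousMap P := funext fun x => (hq x).trans (by simp)
  have hP2 : Continuous fun x => toEuclideanContinuousMap P x ^ 2 := by fun_prop
  calc ρ₀ / K * ∫ x in T, toEuclideanContinuousMap P x ^ 2
      ≤ ρ₀ / K * (K * ∫ x in That, toEuclideanContinuousMap P x ^ 2) := by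
        gcongr; exact hcomp P ((mem_restrictTotalDegree _ _ _).2 hdeg)
    _ = ∫ x in That, ρ₀ * toEuclideanContinuousMap P x ^ 2 := by
        rw [integral_const_mul]; field_simp
    _ ≤ ∫ x in That, Φ x * toEuclideanContinuousMap P x ^ 2 :=
        setIntegral_mono_on ((hP2.integrableOn_of_isBounded hThatbdd).const_mul ρ₀)
          ((hΦc.mul hP2).integrableOn_of_isBounded hThatbdd) hThat.measurableSet
          fun x hx => by gcongr; exact hlb x hx
    _ ≤ ∫ x in T, Φ x * toEuclideanContinuousMap P x ^ 2 :=
        setIntegral_mono_set ((hΦc.mul hP2).integrableOn_of_isBounded hTbdd)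
          ((ae_restrict_iff' hTopen.measurableSet).2 <| ae_of_all _ fun x hx =>
            mul_nonneg (hΦ0 x hx) (sq_nonneg _))
          hsub.eventuallyLE

/-- weighted domain inverse inequality. -/
theorem stmt13 (d : ℕ) (T : Set (EuclideanSpace ℝ (Fin d)))
    (hTopen : IsOpen T) (hTne : T.Nonempty) (hTbdd : Bornology.IsBounded T)
    (Φ : EuclideanSpace ℝ (Fin d) → ℝ) (hΦc : Continuous Φ)
    (hΦ0 : ∀ x ∈ T, 0 ≤ Φ x)
    (That : Set (EuclideanSpace ℝ (Fin d))) (hThat : IsOpen That) (hThatne : That.Nonempty)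
    (hsub : That ⊆ T) (ρ₀ : ℝ) (hρ : 0 < ρ₀) (hlb : ∀ x ∈ That, ρ₀ ≤ Φ x) :
    ∀ r : ℕ, ∃ C > (0 : ℝ), ∀ q : EuclideanSpace ℝ (Fin d) → ℝ, IsPolyDeg d r q →
      C * ∫ x in T, (q x) ^ 2 ≤ ∫ x in T, Φ x * (q x) ^ 2 :=
  stmt13_general d T hTopen hTbdd Φ hΦc hΦ0 That hThat hThatne hsub ρ₀ hρ hlb
end
end
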